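/- arXiv:2602.08862 — 4 statements merged into one kernel-verified Lean document; each statement's English description precedes it below -/
import Mathlib

section
/- Every 1-Lipschitz convex function ℓ : [0,1] → ℝ can be written as ℓ(p) = E_{v∼φ}|p − v| + C for all p ∈ [0,1], where φ is some probability distribution on [0,1] and C = (ℓ(0) + ℓ(1) − 1)/2. -/
open MeasureTheory Set

section Aux

variable (ℓ : ℝ → ℝ)

/-- Right derivative candidate: infimum of forward slopes. -/
noncomputable def ddAux (t : ℝ) : ℝ := sInf (slope ℓ t '' Ioc t 1)

/-- The CDF of the representing measure. -/
noncomputable def FFAux (t : ℝ) : ℝ :=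
  if t < 0 then 0 else if t < 1 then (ddAux ℓ t + 1) / 2 else 1

variable {ℓ}
variable (hlip : ∀ p ∈ Icc (0:ℝ) 1, ∀ q ∈ Icc (0:ℝ) 1, |ℓ p - ℓ q| ≤ |p - q|)
variable (hconv : ConvexOn ℝ (Icc (0:ℝ) 1) ℓ)

include hlip in
lemma slope_bounds {a b : ℝ} (ha : a ∈ Icc (0:ℝ) 1) (hb : b ∈ Icc (0:ℝ) 1) (hab : a < b) :
    -1 ≤ slope ℓ a b ∧ slope ℓ a b ≤ 1 := by
  have h := hlip b hb a ha
  rw [slope_def_field]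
  have hba : (0:ℝ) < b - a := by linarith
  rw [abs_le] at h
  have h2 : |b - a| = b - a := abs_of_pos hba
  rw [h2] at h
  constructor
  · rw [le_div_iff₀ hba]; linarith [h.1]
  · rw [div_le_iff₀ hba]; linarith [h.2]

include hlip in
lemma dd_bddBelow {t : ℝ} (ht0 : 0 ≤ t) (ht1 : t < 1) :
    BddBelow (slope ℓ t '' Ioc t 1) := by
  refine ⟨-1, ?_⟩
  rintro x ⟨y, hy, rfl⟩
  exact (slope_bounds hlip ⟨ht0, ht1.le⟩ ⟨ht0.trans (le_of_lt hy.1), hy.2⟩ hy.1).1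

lemma dd_nonempty {t : ℝ} (ht1 : t < 1) : (slope ℓ t '' Ioc t 1).Nonempty :=
  ⟨slope ℓ t 1, 1, ⟨ht1, le_refl 1⟩, rfl⟩

include hlip in
lemma dd_le_slope {t y : ℝ} (ht0 : 0 ≤ t) (hy : y ∈ Ioc t 1) :
    ddAux ℓ t ≤ slope ℓ t y :=
  csInf_le (dd_bddBelow hlip ht0 (lt_of_lt_of_le hy.1 hy.2)) ⟨y, hy, rfl⟩

include hlip in
lemma dd_bounds {t : ℝ} (ht0 : 0 ≤ t) (ht1 : t < 1) :
    -1 ≤ ddAux ℓ t ∧ ddAux ℓ t ≤ 1 := by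
  constructor
  · apply le_csInf (dd_nonempty ht1)
    rintro x ⟨y, hy, rfl⟩
    exact (slope_bounds hlip ⟨ht0, ht1.le⟩ ⟨ht0.trans hy.1.le, hy.2⟩ hy.1).1
  · exact (dd_le_slope hlip ht0 ⟨ht1, le_refl 1⟩).trans
      (slope_bounds hlip ⟨ht0, ht1.le⟩ ⟨zero_le_one, le_refl 1⟩ ht1).2

include hconv in
lemma slope_three {a b y : ℝ} (ha : 0 ≤ a) (hab : a < b) (hby : b < y) (hy : y ≤ 1) :
    slope ℓ a b ≤ slope ℓ b y := by
  have hmono := hconv.slope_mono (x := b) ⟨ha.trans hab.le, hby.le.trans hy⟩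
  have h1 : a ∈ Icc (0:ℝ) 1 \ {b} := ⟨⟨ha, hab.le.trans (hby.le.trans hy)⟩, fun h => absurd h hab.ne⟩
  have h2 : y ∈ Icc (0:ℝ) 1 \ {b} := ⟨⟨ha.trans (hab.le.trans hby.le), hy⟩, fun h => absurd h.symm hby.ne⟩
  have := hmono h1 h2 (hab.le.trans hby.le)
  rwa [slope_comm ℓ b a] at this

include hlip hconv in
lemma slope_le_dd {a b : ℝ} (ha : 0 ≤ a) (hab : a < b) (hb1 : b < 1) :
    slope ℓ a b ≤ ddAux ℓ b := by
  apply le_csInf (dd_nonempty hb1)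
  rintro x ⟨y, hy, rfl⟩
  exact slope_three hconv ha hab hy.1 hy.2

include hlip hconv in
lemma key_bound {a b : ℝ} (ha : 0 ≤ a) (hab : a < b) (hb : b ≤ 1) :
    (2 * FFAux ℓ a - 1) * (b - a) ≤ ℓ b - ℓ a ∧
      ℓ b - ℓ a ≤ (2 * FFAux ℓ b - 1) * (b - a) := by
  have hba : (0:ℝ) < b - a := by linarith
  have ha1 : a < 1 := lt_of_lt_of_le hab hb
  have hFa : FFAux ℓ a = (ddAux ℓ a + 1) / 2 := by
    simp only [FFAux, if_neg (not_lt.2 ha), if_pos ha1]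
  constructor
  · have h := dd_le_slope hlip ha ⟨hab, hb⟩
    rw [slope_def_field, le_div_iff₀ hba] at h
    rw [hFa]; ring_nf; ring_nf at h; linarith
  · rcases lt_or_ge b 1 with hb1 | hb1
    · have hFb : FFAux ℓ b = (ddAux ℓ b + 1) / 2 := by
        simp only [FFAux, if_neg (not_lt.2 (ha.trans hab.le)), if_pos hb1]
      have h := slope_le_dd hlip hconv ha hab hb1
      rw [slope_def_field, div_le_iff₀ hba] at h
      rw [hFb]; ring_nf; ring_nf at h; linarith
    · have hb1' : b = 1 := le_antisymm hb hb1
      have hFb : FFAux ℓ b = 1 := by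
        simp only [FFAux, if_neg (not_lt.2 (ha.trans hab.le)), if_neg (not_lt.2 hb1)]
      have h := (slope_bounds hlip ⟨ha, ha1.le⟩ ⟨ha.trans hab.le, hb⟩ hab).2
      rw [slope_def_field, div_le_iff₀ hba] at h
      rw [hFb]; linarith

include hlip in
lemma FF_nonneg (t : ℝ) : 0 ≤ FFAux ℓ t := by
  unfold FFAux
  split_ifs with h1 h2
  · exact le_refl 0
  · have := (dd_bounds hlip (not_lt.1 h1) h2).1; linarith
  · norm_num

include hlip in
lemma FF_le_one (t : ℝ) : FFAux ℓ t ≤ 1 := by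
  unfold FFAux
  split_ifs with h1 h2
  · norm_num
  · have := (dd_bounds hlip (not_lt.1 h1) h2).2; linarith
  · exact le_refl 1

include hlip hconv in
lemma dd_mono {s t : ℝ} (hs : 0 ≤ s) (hst : s < t) (ht : t < 1) :
    ddAux ℓ s ≤ ddAux ℓ t :=
  (dd_le_slope hlip hs ⟨hst, ht.le⟩).trans (slope_le_dd hlip hconv hs hst ht)

include hlip hconv in
lemma FF_mono : Monotone (FFAux ℓ) := by
  intro s t hst
  rcases lt_or_ge s 0 with hs | hs
  · rw [show FFAux ℓ s = 0 by simp only [FFAux, if_pos hs]]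
    exact FF_nonneg hlip t
  rcases lt_or_ge t 1 with ht | ht
  · have hs1 : s < 1 := lt_of_le_of_lt hst ht
    have e1 : FFAux ℓ s = (ddAux ℓ s + 1) / 2 := by
      simp only [FFAux, if_neg (not_lt.2 hs), if_pos hs1]
    have e2 : FFAux ℓ t = (ddAux ℓ t + 1) / 2 := by
      simp only [FFAux, if_neg (not_lt.2 (hs.trans hst)), if_pos ht]
    rcases eq_or_lt_of_le hst with rfl | hst'
    · exact le_refl _
    · rw [e1, e2]
      have := dd_mono hlip hconv hs hst' ht
      linarith
  · rw [show FFAux ℓ t = 1 by simp only [FFAux, if_neg (not_lt.2 ((zero_le_one.trans ht).trans (le_refl t))), if_neg (not_lt.2 ht)]]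
    exact FF_le_one hlip s

include hlip hconv in
lemma FF_rightCont (t : ℝ) : ContinuousWithinAt (FFAux ℓ) (Ici t) t := by
  rcases lt_or_ge t 0 with ht | ht0
  · have h0 : FFAux ℓ t = 0 := by simp only [FFAux, if_pos ht]
    unfold ContinuousWithinAt
    rw [h0]
    refine tendsto_const_nhds.congr' ?_
    filter_upwards [mem_nhdsWithin_of_mem_nhds (Iio_mem_nhds ht)] with x hx
    simp [FFAux, show x < 0 from hx]
  rcases lt_or_ge t 1 with ht1 | ht1
  swap
  · have h1 : FFAux ℓ t = 1 := by
      simp only [FFAux, if_neg (not_lt.2 (zero_le_one.trans ht1)), if_neg (not_lt.2 ht1)]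
    unfold ContinuousWithinAt
    rw [h1]
    refine tendsto_const_nhds.congr' ?_
    filter_upwards [self_mem_nhdsWithin] with x hx
    have hx1 : (1:ℝ) ≤ x := ht1.trans hx
    simp only [FFAux, if_neg (not_lt.2 (zero_le_one.trans hx1)), if_neg (not_lt.2 hx1)]
  -- main case 0 ≤ t < 1
  have hFt : FFAux ℓ t = (ddAux ℓ t + 1) / 2 := by
    simp only [FFAux, if_neg (not_lt.2 ht0), if_pos ht1]
  apply tendsto_order.2
  constructor
  · intro a ha
    filter_upwards [self_mem_nhdsWithin] with x hx
    exact lt_of_lt_of_le ha (FF_mono hlip hconv hx)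
  · intro b hb
    set ε : ℝ := min (b - FFAux ℓ t) 1 with hεdef
    have hε : 0 < ε := lt_min (by linarith) one_pos
    have hε1 : ε ≤ 1 := min_le_right _ _
    have hεb : FFAux ℓ t + ε ≤ b := by
      have := min_le_left (b - FFAux ℓ t) 1
      linarith
    -- pick y with slope close to the infimum
    obtain ⟨w, ⟨y, hy, rfl⟩, hw⟩ :=
      exists_lt_of_csInf_lt (dd_nonempty (ℓ := ℓ) ht1)
        (lt_add_of_pos_right (ddAux ℓ t) hε)
    have hty : t < y := hy.1
    have hy1 : y ≤ 1 := hy.2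
    set δ : ℝ := min ((y - t) / 2) (ε * (y - t) / 8) with hδdef
    have hδ : 0 < δ := lt_min (by linarith) (div_pos (mul_pos hε (sub_pos.2 hty)) (by norm_num))
    have hδ1 : δ ≤ (y - t) / 2 := min_le_left _ _
    have hδ2 : δ ≤ ε * (y - t) / 8 := min_le_right _ _
    filter_upwards [Ico_mem_nhdsGE_of_mem (left_mem_Ico.2 (by linarith : t < t + δ))]
      with x hx
    obtain ⟨hxt, hxδ⟩ := hx
    have hxy : x < y := by
      have : x < t + (y - t) / 2 := lt_of_lt_of_le hxδ (by linarith)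
      linarith
    have hx1 : x < 1 := lt_of_lt_of_le hxy hy1
    have hx0 : 0 ≤ x := ht0.trans hxt
    have hFx : FFAux ℓ x = (ddAux ℓ x + 1) / 2 := by
      simp only [FFAux, if_neg (not_lt.2 hx0), if_pos hx1]
    have hyx : 0 < y - x := by linarith
    have hyx2 : (y - t) / 2 ≤ y - x := by linarith
    -- slope t y < dd t + ε
    have h1 : ℓ y - ℓ t < (ddAux ℓ t + ε) * (y - t) := by
      rw [slope_def_field, div_lt_iff₀ (by linarith : (0:ℝ) < y - t)] at hw
      linarith
    -- Lipschitz bound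
    have h2 : ℓ t - (x - t) ≤ ℓ x := by
      have := hlip x ⟨hx0, hx1.le⟩ t ⟨ht0, ht1.le⟩
      rw [abs_le] at this
      have habs : |x - t| = x - t := abs_of_nonneg (by linarith)
      rw [habs] at this
      linarith [this.1, abs_le.1 (hlip t ⟨ht0, ht1.le⟩ x ⟨hx0, hx1.le⟩)]
    have hd1 : ddAux ℓ t ≤ 1 := (dd_bounds hlip ht0 ht1).2
    have h3 : slope ℓ x y < ddAux ℓ t + 2 * ε := by
      rw [slope_def_field, div_lt_iff₀ hyx]
      nlinarith [mul_pos hε (sub_pos.2 hty), hδ2, hδ1, hxδ, hxt, h1, h2,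
        mul_le_mul_of_nonneg_left hyx2 hε.le]
    have h4 : ddAux ℓ x ≤ slope ℓ x y := dd_le_slope hlip hx0 ⟨hxy, hy1⟩
    rw [hFx]
    have : (ddAux ℓ x + 1) / 2 < FFAux ℓ t + ε := by
      rw [hFt]; linarith
    linarith

include hlip hconv in
lemma ftc {p : ℝ} (hp : p ∈ Icc (0:ℝ) 1) :
    ∫ x in (0:ℝ)..p, FFAux ℓ x = (ℓ p - ℓ 0 + p) / 2 := by
  have hint : ∀ a b : ℝ, IntervalIntegrable (fun x => 2 * FFAux ℓ x - 1) volume a b := by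
    intro a b
    apply Monotone.intervalIntegrable
    intro u v huv
    have := FF_mono hlip hconv huv
    simp only
    linarith
  rcases eq_or_lt_of_le hp.1 with rfl | hp0
  · simp
  -- main: show the integral of (2F - 1) equals ℓ p - ℓ 0
  have key : ∀ n : ℕ, 0 < n →
      |(ℓ p - ℓ 0) - ∫ x in (0:ℝ)..p, (2 * FFAux ℓ x - 1)| ≤ 2 * p / n := by
    intro n hn
    set Δ : ℝ := p / n with hΔdef
    have hn' : (0:ℝ) < n := Nat.cast_pos.2 hn
    have hΔ : 0 < Δ := div_pos hp0 hn'
    set a : ℕ → ℝ := fun i => i * Δ with hadef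
    have ha0 : a 0 = 0 := by simp [hadef]
    have han : a n = p := by simp only [hadef, hΔdef]; field_simp
    have hastep : ∀ i : ℕ, a (i + 1) - a i = Δ := by
      intro i; simp [hadef]; push_cast; ring
    have hamono : ∀ i : ℕ, a i < a (i + 1) := by
      intro i; have := hastep i; linarith
    have hmem : ∀ i : ℕ, i ≤ n → a i ∈ Icc (0:ℝ) 1 := by
      intro i hi
      constructor
      · exact mul_nonneg (Nat.cast_nonneg i) hΔ.le
      · have : a i ≤ a n := by
          apply mul_le_mul_of_nonneg_right _ hΔ.le
          exact_mod_cast hi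
        rw [han] at this
        exact this.trans hp.2
    have hsum : ∑ i ∈ Finset.range n, ∫ x in a i..a (i + 1), (2 * FFAux ℓ x - 1) =
        ∫ x in (0:ℝ)..p, (2 * FFAux ℓ x - 1) := by
      rw [← ha0, ← han]
      exact intervalIntegral.sum_integral_adjacent_intervals fun i _ => hint _ _
    have hsumℓ : ∑ i ∈ Finset.range n, (ℓ (a (i + 1)) - ℓ (a i)) = ℓ p - ℓ 0 := by
      rw [Finset.sum_range_sub (fun i => ℓ (a i)), ha0, han]
    -- per-interval bounds
    have hbound : ∀ i ∈ Finset.range n,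
        |(ℓ (a (i + 1)) - ℓ (a i)) - ∫ x in a i..a (i + 1), (2 * FFAux ℓ x - 1)| ≤
          (2 * FFAux ℓ (a (i + 1)) - 1) * Δ - (2 * FFAux ℓ (a i) - 1) * Δ := by
      intro i hi
      rw [Finset.mem_range] at hi
      have hai := hmem i hi.le
      have hai1 := hmem (i + 1) hi
      have hk := key_bound hlip hconv hai.1 (hamono i) hai1.2
      rw [hastep i] at hk
      have hIlow : (2 * FFAux ℓ (a i) - 1) * Δ ≤ ∫ x in a i..a (i + 1), (2 * FFAux ℓ x - 1) := by
        have := intervalIntegral.integral_mono_on (a := a i) (b := a (i+1))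
          (f := fun _ => 2 * FFAux ℓ (a i) - 1) (g := fun x => 2 * FFAux ℓ x - 1)
          (hamono i).le (intervalIntegrable_const) (hint _ _)
          (fun x hx => by have := FF_mono hlip hconv hx.1; linarith)
        rwa [intervalIntegral.integral_const, hastep i, smul_eq_mul, mul_comm] at this
      have hIhigh : (∫ x in a i..a (i + 1), (2 * FFAux ℓ x - 1)) ≤
          (2 * FFAux ℓ (a (i + 1)) - 1) * Δ := by
        have := intervalIntegral.integral_mono_on (a := a i) (b := a (i+1))
          (f := fun x => 2 * FFAux ℓ x - 1) (g := fun _ => 2 * FFAux ℓ (a (i+1)) - 1)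
          (hamono i).le (hint _ _) (intervalIntegrable_const)
          (fun x hx => by have := FF_mono hlip hconv hx.2; linarith)
        rwa [intervalIntegral.integral_const, hastep i, smul_eq_mul, mul_comm] at this
      rw [abs_le]
      constructor <;> [linarith [hk.1, hk.2, hIlow, hIhigh]; linarith [hk.1, hk.2, hIlow, hIhigh]]
    calc |(ℓ p - ℓ 0) - ∫ x in (0:ℝ)..p, (2 * FFAux ℓ x - 1)|
        = |∑ i ∈ Finset.range n, ((ℓ (a (i + 1)) - ℓ (a i)) -
            ∫ x in a i..a (i + 1), (2 * FFAux ℓ x - 1))| := by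
          rw [Finset.sum_sub_distrib, hsum, hsumℓ]
      _ ≤ ∑ i ∈ Finset.range n, |(ℓ (a (i + 1)) - ℓ (a i)) -
            ∫ x in a i..a (i + 1), (2 * FFAux ℓ x - 1)| := Finset.abs_sum_le_sum_abs _ _
      _ ≤ ∑ i ∈ Finset.range n, ((2 * FFAux ℓ (a (i + 1)) - 1) * Δ -
            (2 * FFAux ℓ (a i) - 1) * Δ) := Finset.sum_le_sum hbound
      _ = (2 * FFAux ℓ (a n) - 1) * Δ - (2 * FFAux ℓ (a 0) - 1) * Δ :=
          Finset.sum_range_sub (fun i => (2 * FFAux ℓ (a i) - 1) * Δ) n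
      _ ≤ 2 * p / n := by
          rw [ha0, han]
          have h1 := FF_le_one hlip p
          have h2 := FF_nonneg hlip (0:ℝ)
          have : (2 * FFAux ℓ p - 1) * Δ - (2 * FFAux ℓ 0 - 1) * Δ ≤ 2 * Δ := by nlinarith
          calc (2 * FFAux ℓ p - 1) * Δ - (2 * FFAux ℓ 0 - 1) * Δ ≤ 2 * Δ := this
            _ = 2 * p / n := by rw [hΔdef]; ring
  have hS : (∫ x in (0:ℝ)..p, (2 * FFAux ℓ x - 1)) = ℓ p - ℓ 0 := by
    by_contra hne
    set X := (ℓ p - ℓ 0) - ∫ x in (0:ℝ)..p, (2 * FFAux ℓ x - 1) with hXdef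
    have hX : X ≠ 0 := fun h => hne (by rw [hXdef] at h; linarith)
    have hXpos : 0 < |X| := abs_pos.2 hX
    obtain ⟨n, hn⟩ := exists_nat_gt (2 * p / |X|)
    have hn0 : 0 < n := by
      by_contra h
      push_neg at h
      interval_cases n
      simp at hn
      nlinarith [div_pos (by linarith : (0:ℝ) < 2 * p) hXpos]
    have h1 := key n hn0
    have hn' : (0:ℝ) < n := Nat.cast_pos.2 hn0
    rw [div_lt_iff₀ hXpos] at hn
    have : 2 * p / n < |X| := by
      rw [div_lt_iff₀ hn']
      nlinarith
    linarith
  have hFint : ∀ a b : ℝ, IntervalIntegrable (FFAux ℓ) volume a b := fun a b =>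
    Monotone.intervalIntegrable (FF_mono hlip hconv)
  have expand : (∫ x in (0:ℝ)..p, (2 * FFAux ℓ x - 1)) =
      2 * (∫ x in (0:ℝ)..p, FFAux ℓ x) - p := by
    rw [intervalIntegral.integral_sub ((hFint 0 p).const_mul 2) intervalIntegrable_const,
      intervalIntegral.integral_const_mul, intervalIntegral.integral_const]
    simp
  rw [expand] at hS
  linarith

end Aux

theorem stmt0 (ℓ : ℝ → ℝ)
    (hlip : ∀ p ∈ Icc (0:ℝ) 1, ∀ q ∈ Icc (0:ℝ) 1, |ℓ p - ℓ q| ≤ |p - q|)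
    (hconv : ConvexOn ℝ (Icc (0:ℝ) 1) ℓ) :
    ∃ φ : Measure ℝ, IsProbabilityMeasure φ ∧ φ (Icc (0:ℝ) 1) = 1 ∧
      ∀ p ∈ Icc (0:ℝ) 1, ℓ p = (∫ v, |p - v| ∂φ) + (ℓ 0 + ℓ 1 - 1) / 2 := by
  set Fs : StieltjesFunction ℝ := ⟨FFAux ℓ, FF_mono hlip hconv, FF_rightCont hlip hconv⟩ with hFs
  have hcoe : ⇑Fs = FFAux ℓ := rfl
  set φ := Fs.measure with hφ
  have hbot : Filter.Tendsto (FFAux ℓ) Filter.atBot (nhds 0) := by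
    refine tendsto_const_nhds.congr' ?_
    filter_upwards [Filter.eventually_le_atBot (-1 : ℝ)] with x hx
    simp [FFAux, show x < 0 by linarith]
  have htop : Filter.Tendsto (FFAux ℓ) Filter.atTop (nhds 1) := by
    refine tendsto_const_nhds.congr' ?_
    filter_upwards [Filter.eventually_ge_atTop (1 : ℝ)] with x hx
    simp [FFAux, show ¬ x < 0 by linarith, show ¬ x < 1 by linarith]
  have hbot' : Filter.Tendsto Fs Filter.atBot (nhds 0) := hbot
  have htop' : Filter.Tendsto Fs Filter.atTop (nhds 1) := htop
  haveI hprob : IsProbabilityMeasure φ := Fs.isProbabilityMeasure hbot' htop'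
  have hF1 : FFAux ℓ 1 = 1 := by norm_num [FFAux]
  have hll : Function.leftLim (FFAux ℓ) 0 = 0 := by
    apply leftLim_eq_of_tendsto
    refine tendsto_const_nhds.congr' ?_
    filter_upwards [self_mem_nhdsWithin] with x (hx : x < 0)
    simp [FFAux, hx]
  have hIcc : φ (Icc (0:ℝ) 1) = 1 := by
    rw [hφ, Fs.measure_Icc]
    show ENNReal.ofReal (FFAux ℓ 1 - Function.leftLim (FFAux ℓ) 0) = 1
    rw [hF1, hll]; norm_num
  refine ⟨φ, hprob, hIcc, ?_⟩
  intro p hp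
  have haemem : ∀ᵐ v ∂φ, v ∈ Icc (0:ℝ) 1 := by
    have hc : φ (Icc (0:ℝ) 1)ᶜ = 0 := by
      rw [measure_compl measurableSet_Icc (measure_ne_top _ _), hIcc, measure_univ, tsub_self]
    rw [ae_iff]
    convert hc using 2
    rfl
  have hIic : ∀ x : ℝ, φ (Iic x) = ENNReal.ofReal (FFAux ℓ x) := by
    intro x
    rw [hφ, Fs.measure_Iic hbot', sub_zero]
  have hIoi : ∀ x : ℝ, (φ (Ioi x)).toReal = 1 - FFAux ℓ x := by
    intro x
    have h1 : φ (Ioi x) = φ univ - φ (Iic x) := by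
      rw [← compl_Iic]
      exact measure_compl measurableSet_Iic (measure_ne_top _ _)
    rw [h1, measure_univ, hIic x, ← ENNReal.ofReal_one,
      ← ENNReal.ofReal_sub 1 (FF_nonneg hlip x),
      ENNReal.toReal_ofReal (by linarith [FF_le_one hlip x])]
  -- integrability
  have hbd : ∀ f : ℝ → ℝ, (∀ v ∈ Icc (0:ℝ) 1, ‖f v‖ ≤ 2) → AEStronglyMeasurable f φ →
      Integrable f φ := by
    intro f hf hm
    refine Integrable.mono' (integrable_const (2:ℝ)) hm ?_
    filter_upwards [haemem] with v hv using hf v hv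
  have hint1 : Integrable (fun v => max (p - v) 0) φ := by
    refine hbd _ (fun v hv => ?_) ((continuous_const.sub continuous_id).max continuous_const).aestronglyMeasurable
    rw [Real.norm_eq_abs, abs_le]
    constructor
    · have := le_max_right (p - v) 0; linarith
    · rcases le_max_iff.1 (le_refl (max (p - v) 0)) with h | h
      · have h1 := hp.1; have h2 := hp.2; have h3 := hv.1; have h4 := hv.2
        rcases max_cases (p - v) 0 with ⟨he, _⟩ | ⟨he, _⟩ <;> rw [he] <;> linarith
      · rcases max_cases (p - v) 0 with ⟨he, _⟩ | ⟨he, _⟩ <;> rw [he] <;>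
          [skip; norm_num] <;> (have h1 := hp.2; have h3 := hv.1; linarith)
  have hint2 : Integrable (fun v => max (v - p) 0) φ := by
    refine hbd _ (fun v hv => ?_) ((continuous_id.sub continuous_const).max continuous_const).aestronglyMeasurable
    rw [Real.norm_eq_abs, abs_le]
    have h1 := hp.1; have h2 := hp.2; have h3 := hv.1; have h4 := hv.2
    constructor
    · have := le_max_right (v - p) 0; linarith
    · rcases max_cases (v - p) 0 with ⟨he, _⟩ | ⟨he, _⟩ <;> rw [he] <;> linarith
  -- split the absolute value
  have hsplit : (∫ v, |p - v| ∂φ) =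
      (∫ v, max (p - v) 0 ∂φ) + ∫ v, max (v - p) 0 ∂φ := by
    rw [← integral_add hint1 hint2]
    apply integral_congr_ae
    filter_upwards with v
    rcases le_total v p with h | h
    · rw [abs_of_nonneg (by linarith), max_eq_left (by linarith), max_eq_right (by linarith)]
      ring
    · rw [abs_of_nonpos (by linarith), max_eq_right (by linarith), max_eq_left (by linarith)]
      ring
  -- first piece
  have hI1 : (∫ v, max (p - v) 0 ∂φ) = ∫ x in (0:ℝ)..p, FFAux ℓ x := by
    rw [hint1.integral_eq_integral_meas_le (Filter.Eventually.of_forall fun v => le_max_right _ _)]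
    simp only [measureReal_def]
    have e1 : ∫ t in Ioi (0:ℝ), (φ {a : ℝ | t ≤ max (p - a) 0}).toReal =
        ∫ t in Ioi (0:ℝ), FFAux ℓ (p - t) := by
      apply setIntegral_congr_fun measurableSet_Ioi
      intro t ht
      have hset : {a : ℝ | t ≤ max (p - a) 0} = Iic (p - t) := by
        ext a
        simp only [mem_setOf_eq, mem_Iic, le_max_iff]
        constructor
        · rintro (h | h)
          · linarith
          · exact absurd h (not_le.2 ht)
        · intro h; left; linarith
      beta_reduce
      rw [hset, hIic, ENNReal.toReal_ofReal (FF_nonneg hlip _)]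
    rw [e1]
    have e2 : ∫ t in Ioi (0:ℝ), FFAux ℓ (p - t) = ∫ t in Ioc (0:ℝ) p, FFAux ℓ (p - t) := by
      apply setIntegral_eq_of_subset_of_ae_diff_eq_zero measurableSet_Ioi.nullMeasurableSet
        Ioc_subset_Ioi_self
      refine Filter.Eventually.of_forall fun t ht => ?_
      obtain ⟨ht0, htp⟩ := ht
      have : p < t := by
        by_contra h
        exact htp ⟨ht0, not_lt.1 h⟩
      simp [FFAux, show p - t < 0 by linarith]
    rw [e2, ← intervalIntegral.integral_of_le hp.1,
      intervalIntegral.integral_comp_sub_left (FFAux ℓ) p]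
    norm_num
  -- second piece
  have hI2 : (∫ v, max (v - p) 0 ∂φ) = ∫ x in p..(1:ℝ), (1 - FFAux ℓ x) := by
    rw [hint2.integral_eq_integral_meas_lt (Filter.Eventually.of_forall fun v => le_max_right _ _)]
    simp only [measureReal_def]
    have e1 : ∫ t in Ioi (0:ℝ), (φ {a : ℝ | t < max (a - p) 0}).toReal =
        ∫ t in Ioi (0:ℝ), (1 - FFAux ℓ (p + t)) := by
      apply setIntegral_congr_fun measurableSet_Ioi
      intro t ht
      have hset : {a : ℝ | t < max (a - p) 0} = Ioi (p + t) := by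
        ext a
        simp only [mem_setOf_eq, mem_Ioi, lt_max_iff]
        constructor
        · rintro (h | h)
          · linarith
          · exact absurd h (not_lt.2 (le_of_lt ht))
        · intro h; left; linarith
      beta_reduce
      rw [hset, hIoi]
    rw [e1]
    have e2 : ∫ t in Ioi (0:ℝ), (1 - FFAux ℓ (p + t)) =
        ∫ t in Ioc (0:ℝ) (1 - p), (1 - FFAux ℓ (p + t)) := by
      apply setIntegral_eq_of_subset_of_ae_diff_eq_zero measurableSet_Ioi.nullMeasurableSet
        Ioc_subset_Ioi_self
      refine Filter.Eventually.of_forall fun t ht => ?_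
      obtain ⟨ht0, htp⟩ := ht
      have h1p : 1 - p < t := by
        by_contra h
        exact htp ⟨ht0, not_lt.1 h⟩
      simp [FFAux, show ¬ p + t < 0 by nlinarith [hp.1, hp.2],
        show ¬ p + t < 1 by nlinarith [hp.1, hp.2]]
    rw [e2, ← intervalIntegral.integral_of_le (by linarith [hp.2] : (0:ℝ) ≤ 1 - p)]
    have := intervalIntegral.integral_comp_add_left (a := (0:ℝ)) (b := 1 - p)
      (fun x => 1 - FFAux ℓ x) p
    rw [this]
    norm_num
  -- assemble
  have hFint : ∀ a b : ℝ, IntervalIntegrable (FFAux ℓ) volume a b := fun a b =>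
    Monotone.intervalIntegrable (FF_mono hlip hconv)
  have hadj : (∫ x in (0:ℝ)..p, FFAux ℓ x) + (∫ x in p..(1:ℝ), FFAux ℓ x) =
      ∫ x in (0:ℝ)..(1:ℝ), FFAux ℓ x :=
    intervalIntegral.integral_add_adjacent_intervals (hFint 0 p) (hFint p 1)
  have hsub : (∫ x in p..(1:ℝ), (1 - FFAux ℓ x)) =
      (1 - p) - ∫ x in p..(1:ℝ), FFAux ℓ x := by
    rw [intervalIntegral.integral_sub intervalIntegrable_const (hFint p 1),
      intervalIntegral.integral_const]
    simp
  have hftc_p := ftc hlip hconv hp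
  have hftc_1 := ftc hlip hconv (right_mem_Icc.2 zero_le_one)
  rw [hsplit, hI1, hI2, hsub]
  have h1 : (∫ x in p..(1:ℝ), FFAux ℓ x) =
      (∫ x in (0:ℝ)..(1:ℝ), FFAux ℓ x) - ∫ x in (0:ℝ)..p, FFAux ℓ x := by linarith
  rw [h1, hftc_p, hftc_1]
  ring
end

section
/- Let ℓ : [0,1] → ℝ be 1-Lipschitz and convex with ℓ(0) + ℓ(1) = 1 and with a right-continuous nondecreasing subgradient ∇ℓ satisfying ∇ℓ(1) = 1. If φ is the probability distribution on [0,1] whose CDF is p ↦ (∇ℓ(p) + 1)/2, then for every p ∈ [0,1], E_{v∼φ}|p − v| = ℓ(p). -/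
open MeasureTheory Set

private lemma ftc_aux (ℓ g : ℝ → ℝ)
    (hlip : ∀ p ∈ Icc (0:ℝ) 1, ∀ q ∈ Icc (0:ℝ) 1, |ℓ p - ℓ q| ≤ |p - q|)
    (hg_mono : MonotoneOn g (Icc (0:ℝ) 1))
    (hg_rc : ∀ p ∈ Ico (0:ℝ) 1, ContinuousWithinAt g (Ici p) p)
    (hg_sub : ∀ p ∈ Icc (0:ℝ) 1, ∀ q ∈ Icc (0:ℝ) 1, ℓ q ≥ ℓ p + g p * (q - p))
    {a b : ℝ} (ha : 0 ≤ a) (hb : b ≤ 1) (hab : a ≤ b) :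
    ∫ x in a..b, g x = ℓ b - ℓ a := by
  have hsub : Icc a b ⊆ Icc (0:ℝ) 1 := Icc_subset_Icc ha hb
  have hcont : ContinuousOn ℓ (Icc a b) := by
    have : LipschitzOnWith 1 ℓ (Icc (0:ℝ) 1) := by
      rw [lipschitzOnWith_iff_dist_le_mul]
      intro x hx y hy
      simpa [Real.dist_eq] using hlip x hx y hy
    exact (this.continuousOn).mono hsub
  apply intervalIntegral.integral_eq_sub_of_hasDeriv_right_of_le hab hcont
  · intro x hx
    have hx01 : x ∈ Icc (0:ℝ) 1 := hsub (Ioo_subset_Icc_self hx)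
    have hx1 : x < 1 := lt_of_lt_of_le hx.2 hb
    rw [hasDerivWithinAt_iff_tendsto_slope]
    have hIoi : (Ioi x) \ {x} = Ioi x := by
      ext y; simp only [mem_diff, mem_Ioi, mem_singleton_iff, and_iff_left_iff_imp]
      exact fun h => ne_of_gt h
    rw [hIoi]
    have hgt : Filter.Tendsto g (nhdsWithin x (Ioi x)) (nhds (g x)) :=
      (hg_rc x ⟨le_trans ha hx.1.le, hx1⟩).tendsto.mono_left
        (nhdsWithin_mono x Ioi_subset_Ici_self)
    have hev : ∀ᶠ y in nhdsWithin x (Ioi x), y ∈ Icc (0:ℝ) 1 := by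
      have : ∀ᶠ y in nhdsWithin x (Ioi x), y < 1 :=
        eventually_nhdsWithin_of_eventually_nhds (Filter.Tendsto.eventually_lt_const hx1 Filter.tendsto_id)
      filter_upwards [this, self_mem_nhdsWithin] with y hy1 hyx
      exact ⟨le_trans hx01.1 (le_of_lt hyx), le_of_lt hy1⟩
    apply tendsto_of_tendsto_of_tendsto_of_le_of_le' tendsto_const_nhds hgt
    · filter_upwards [self_mem_nhdsWithin, hev] with y hy hy01
      have h1 := hg_sub x hx01 y hy01
      have hyx : (0:ℝ) < y - x := sub_pos.mpr hy
      rw [slope_def_field, le_div_iff₀ hyx]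
      linarith
    · filter_upwards [self_mem_nhdsWithin, hev] with y hy hy01
      have h2 := hg_sub y hy01 x hx01
      have hyx : (0:ℝ) < y - x := sub_pos.mpr hy
      rw [slope_def_field, div_le_iff₀ hyx]
      nlinarith [h2]
  · have : MonotoneOn g (uIcc a b) := by
      rw [uIcc_of_le hab]; exact hg_mono.mono hsub
    exact this.intervalIntegrable

theorem stmt1 (ℓ g : ℝ → ℝ) (φ : Measure ℝ) [IsProbabilityMeasure φ]
    (hsupp : φ (Icc (0:ℝ) 1) = 1)
    (hlip : ∀ p ∈ Icc (0:ℝ) 1, ∀ q ∈ Icc (0:ℝ) 1, |ℓ p - ℓ q| ≤ |p - q|)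
    (hconv : ConvexOn ℝ (Icc (0:ℝ) 1) ℓ)
    (hsum : ℓ 0 + ℓ 1 = 1)
    (hg_range : ∀ p ∈ Icc (0:ℝ) 1, g p ∈ Icc (-1:ℝ) 1)
    (hg_mono : MonotoneOn g (Icc (0:ℝ) 1))
    (hg_rc : ∀ p ∈ Ico (0:ℝ) 1, ContinuousWithinAt g (Ici p) p)
    (hg_sub : ∀ p ∈ Icc (0:ℝ) 1, ∀ q ∈ Icc (0:ℝ) 1, ℓ q ≥ ℓ p + g p * (q - p))
    (hg1 : g 1 = 1)
    (hcdf : ∀ p ∈ Icc (0:ℝ) 1, (φ (Iic p)).toReal = (g p + 1) / 2) :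
    ∀ p ∈ Icc (0:ℝ) 1, (∫ v, |p - v| ∂φ) = ℓ p := by
  intro p hp
  have hcompl : φ ((Icc (0:ℝ) 1)ᶜ) = 0 := by
    have h := measure_compl (measurableSet_Icc : MeasurableSet (Icc (0:ℝ) 1)) (measure_ne_top φ _)
    rw [hsupp, measure_univ] at h
    simpa using h
  have hae : ∀ᵐ v ∂φ, v ∈ Icc (0:ℝ) 1 := by
    rw [ae_iff]
    exact hcompl
  set f1 : ℝ → ℝ := fun v => max (p - v) 0 with hf1
  set f2 : ℝ → ℝ := fun v => max (v - p) 0 with hf2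
  have hm1 : AEStronglyMeasurable f1 φ :=
    ((continuous_const.sub continuous_id).max continuous_const).aestronglyMeasurable
  have hm2 : AEStronglyMeasurable f2 φ :=
    ((continuous_id.sub continuous_const).max continuous_const).aestronglyMeasurable
  have hint1 : Integrable f1 φ := by
    apply (integrable_const (1:ℝ)).mono' hm1
    filter_upwards [hae] with v hv
    rw [Real.norm_eq_abs, abs_of_nonneg (le_max_right _ _)]
    rw [max_le_iff]
    constructor <;> [skip; norm_num]
    linarith [hp.1, hp.2, hv.1, hv.2]
  have hint2 : Integrable f2 φ := by
    apply (integrable_const (1:ℝ)).mono' hm2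
    filter_upwards [hae] with v hv
    rw [Real.norm_eq_abs, abs_of_nonneg (le_max_right _ _)]
    rw [max_le_iff]
    constructor <;> [skip; norm_num]
    linarith [hp.1, hp.2, hv.1, hv.2]
  have habs : ∀ v, |p - v| = f1 v + f2 v := by
    intro v
    rcases le_total v p with h | h
    · rw [hf1, hf2]
      simp only
      rw [abs_of_nonneg (by linarith : (0:ℝ) ≤ p - v),
        max_eq_left (by linarith : (0:ℝ) ≤ p - v),
        max_eq_right (by linarith : v - p ≤ 0)]
      ring
    · rw [hf1, hf2]
      simp only
      rw [abs_of_nonpos (by linarith : p - v ≤ 0),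
        max_eq_right (by linarith : p - v ≤ 0),
        max_eq_left (by linarith : (0:ℝ) ≤ v - p)]
      ring
  have hsplit : (∫ v, |p - v| ∂φ) = (∫ v, f1 v ∂φ) + ∫ v, f2 v ∂φ := by
    rw [← integral_add hint1 hint2]
    exact integral_congr_ae (Filter.Eventually.of_forall fun v => habs v)
  -- Part A
  have hA : (∫ v, f1 v ∂φ) = ∫ s in (0:ℝ)..p, ((g s + 1) / 2) := by
    rw [hint1.integral_eq_integral_meas_le
      (Filter.Eventually.of_forall fun v => le_max_right _ _)]
    have hset : ∀ t ∈ Ioi (0:ℝ), (φ {a | t ≤ f1 a}).toReal = (φ (Iic (p - t))).toReal := by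
      intro t ht
      congr 1
      apply congrArg
      ext v
      simp only [hf1, mem_setOf_eq, mem_Iic, le_max_iff]
      constructor
      · rintro (h | h)
        · linarith
        · exact absurd h (not_le.mpr ht)
      · intro h; left; linarith
    simp only [Measure.real]
    rw [setIntegral_congr_fun measurableSet_Ioi hset]
    rw [setIntegral_eq_of_subset_of_forall_diff_eq_zero measurableSet_Ioi
      (Ioc_subset_Ioi_self : Ioc (0:ℝ) p ⊆ Ioi 0) ?_]
    · rw [← intervalIntegral.integral_of_le hp.1,
        intervalIntegral.integral_comp_sub_left (fun s => (φ (Iic s)).toReal) p]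
      rw [sub_self, sub_zero]
      apply intervalIntegral.integral_congr
      intro s hs
      rw [uIcc_of_le hp.1] at hs
      exact hcdf s ⟨hs.1, le_trans hs.2 hp.2⟩
    · intro t ht
      simp only [mem_diff, mem_Ioi, mem_Ioc, not_and, not_le] at ht
      have htp : p < t := ht.2 ht.1
      have : φ (Iic (p - t)) = 0 := by
        apply measure_mono_null _ hcompl
        intro v hv
        simp only [mem_Iic] at hv
        simp only [mem_compl_iff, mem_Icc, not_and, not_le]
        intro h0
        linarith
      rw [this, ENNReal.toReal_zero]
  -- Part B
  have hB : (∫ v, f2 v ∂φ) = ∫ s in p..(1:ℝ), (1 - (g s + 1) / 2) := by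
    rw [hint2.integral_eq_integral_meas_lt
      (Filter.Eventually.of_forall fun v => le_max_right _ _)]
    have hset : ∀ t ∈ Ioi (0:ℝ), (φ {a | t < f2 a}).toReal = (φ (Ioi (p + t))).toReal := by
      intro t ht
      congr 1
      apply congrArg
      ext v
      simp only [hf2, mem_setOf_eq, mem_Ioi, lt_max_iff]
      constructor
      · rintro (h | h)
        · linarith
        · exact absurd h (not_lt.mpr (le_of_lt ht))
      · intro h; left; linarith
    simp only [Measure.real]
    rw [setIntegral_congr_fun measurableSet_Ioi hset]
    rw [setIntegral_eq_of_subset_of_forall_diff_eq_zero measurableSet_Ioi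
      (Ioc_subset_Ioi_self : Ioc (0:ℝ) (1 - p) ⊆ Ioi 0) ?_]
    · rw [← intervalIntegral.integral_of_le (by linarith [hp.2] : (0:ℝ) ≤ 1 - p),
        intervalIntegral.integral_comp_add_left (fun s => (φ (Ioi s)).toReal) p]
      rw [add_zero, show p + (1 - p) = (1:ℝ) by ring]
      apply intervalIntegral.integral_congr
      intro s hs
      rw [uIcc_of_le hp.2] at hs
      have hs01 : s ∈ Icc (0:ℝ) 1 := ⟨le_trans hp.1 hs.1, hs.2⟩
      show (φ (Ioi s)).toReal = 1 - (g s + 1) / 2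
      have hIoi : φ (Ioi s) = 1 - φ (Iic s) := by
        rw [← compl_Iic, measure_compl measurableSet_Iic (measure_ne_top φ _), measure_univ]
      rw [hIoi, ENNReal.toReal_sub_of_le prob_le_one ENNReal.one_ne_top, ENNReal.toReal_one,
        hcdf s hs01]
    · intro t ht
      simp only [mem_diff, mem_Ioi, mem_Ioc, not_and, not_le] at ht
      have htp : 1 - p < t := ht.2 ht.1
      have : φ (Ioi (p + t)) = 0 := by
        apply measure_mono_null _ hcompl
        intro v hv
        simp only [mem_Ioi] at hv
        simp only [mem_compl_iff, mem_Icc, not_and, not_le]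
        intro h0
        linarith
      rw [this, ENNReal.toReal_zero]
  -- compute the interval integrals
  have hgint1 : IntervalIntegrable g volume 0 p := by
    apply MonotoneOn.intervalIntegrable
    rw [uIcc_of_le hp.1]
    exact hg_mono.mono (Icc_subset_Icc le_rfl hp.2)
  have hgint2 : IntervalIntegrable g volume p 1 := by
    apply MonotoneOn.intervalIntegrable
    rw [uIcc_of_le hp.2]
    exact hg_mono.mono (Icc_subset_Icc hp.1 le_rfl)
  have hftc1 : ∫ x in (0:ℝ)..p, g x = ℓ p - ℓ 0 :=
    ftc_aux ℓ g hlip hg_mono hg_rc hg_sub le_rfl hp.2 hp.1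
  have hftc2 : ∫ x in p..(1:ℝ), g x = ℓ 1 - ℓ p :=
    ftc_aux ℓ g hlip hg_mono hg_rc hg_sub hp.1 le_rfl hp.2
  have hI1 : (∫ s in (0:ℝ)..p, ((g s + 1) / 2)) = (ℓ p - ℓ 0 + p) / 2 := by
    have : ∀ s, (g s + 1) / 2 = g s * (1/2) + 1/2 := fun s => by ring
    simp_rw [this]
    rw [intervalIntegral.integral_add (hgint1.mul_const _) intervalIntegrable_const,
      intervalIntegral.integral_mul_const, hftc1, intervalIntegral.integral_const]
    simp [smul_eq_mul]
    ring
  have hI2 : (∫ s in p..(1:ℝ), (1 - (g s + 1) / 2)) = ((1 - p) - (ℓ 1 - ℓ p)) / 2 := by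
    have : ∀ s, 1 - (g s + 1) / 2 = g s * (-(1/2)) + 1/2 := fun s => by ring
    simp_rw [this]
    rw [intervalIntegral.integral_add (hgint2.mul_const _) intervalIntegrable_const,
      intervalIntegral.integral_mul_const, hftc2, intervalIntegral.integral_const]
    simp [smul_eq_mul]
    ring
  rw [hsplit, hA, hB, hI1, hI2]
  linarith [hsum]
end

section
/- Let φ be a probability distribution on [0,1] and γ ∈ (0,1]. There exists a unique w ∈ [γ,1] such that w ∈ Q_φ(1/2 + γ/(2w)) − Q_φ(1/2 − γ/(2w)), i.e., there exist α ∈ Q_φ(1/2 − γ/(2w)) and β ∈ Q_φ(1/2 + γ/(2w)) with β − α = w. -/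
/-!
The relation "`q` is a `z`-quantile" is closed in `(z, q)`, because `x ↦ φ (Iic x)` is upper and
`x ↦ φ (Iio x)` lower semicontinuous, and for each level `z ∈ [0,1]` its fibre `Q_φ(z)` is a
nonempty interval. Hence `w ↦ Q_φ(1/2 + γ/(2w)) − Q_φ(1/2 − γ/(2w))` is an interval-valued map
on `[γ, 1]` with compact graph. At `w = γ` the levels are `0` and `1`, where the gap `1 − 0 ≥ γ`
occurs; at `w = 1` every gap is at most `1`. Connectedness of `[γ, 1]` (a one-dimensional
Kakutani argument) yields a `w` lying in its own gap set. As `w` increases the two levels move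
strictly inwards, so every gap can only shrink while `w` grows: the fixed point is unique.
-/

open MeasureTheory Set

/-- `q` is a `z`-quantile of the distribution `φ` on `[0,1]`. -/
def isQuantile (φ : Measure ℝ) (z q : ℝ) : Prop :=
  q ∈ Icc (0:ℝ) 1 ∧ (φ (Iio q)).toReal ≤ z ∧ z ≤ (φ (Iic q)).toReal

open Filter Topology ProbabilityTheory
open scoped Pointwise

theorem exists_mem_self_of_isCompact_graph {a b : ℝ} (hab : a ≤ b) {T : ℝ → Set ℝ}
    (hT : IsCompact {p : ℝ × ℝ | p.1 ∈ Icc a b ∧ p.2 ∈ T p.1})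
    (hne : ∀ w ∈ Icc a b, (T w).Nonempty) (hconn : ∀ w ∈ Icc a b, (T w).OrdConnected)
    (ha : ∃ g ∈ T a, a ≤ g) (hb : ∃ g ∈ T b, g ≤ b) :
    ∃ w ∈ Icc a b, w ∈ T w := by
  set K := {p : ℝ × ℝ | p.1 ∈ Icc a b ∧ p.2 ∈ T p.1}
  have hclosed (r : ℝ × ℝ → Prop) (hr : IsClosed {p | r p}) :
      IsClosed (Prod.fst '' (K ∩ {p | r p})) :=
    ((hT.inter_right hr).image continuous_fst).isClosed
  have hcover :
      Icc a b ⊆ Prod.fst '' (K ∩ {p | p.1 ≤ p.2}) ∪ Prod.fst '' (K ∩ {p | p.2 ≤ p.1}) := by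
    intro w hw
    obtain ⟨g, hg⟩ := hne w hw
    rcases le_total w g with h | h
    exacts [Or.inl ⟨(w, g), ⟨⟨hw, hg⟩, h⟩, rfl⟩, Or.inr ⟨(w, g), ⟨⟨hw, hg⟩, h⟩, rfl⟩]
  obtain ⟨g, hg, hag⟩ := ha
  obtain ⟨g', hg', hg'b⟩ := hb
  obtain ⟨w, hw, ⟨⟨_, g₁⟩, ⟨⟨-, hg₁⟩, hwg₁⟩, rfl⟩, ⟨⟨w₂, g₂⟩, ⟨⟨-, hg₂⟩, hg₂w⟩, hw₂⟩⟩ :=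
    isPreconnected_closed_iff.1 isPreconnected_Icc _ _
      (hclosed _ (isClosed_le continuous_fst continuous_snd))
      (hclosed _ (isClosed_le continuous_snd continuous_fst)) hcover
      ⟨a, left_mem_Icc.2 hab, (a, g), ⟨⟨left_mem_Icc.2 hab, hg⟩, hag⟩, rfl⟩
      ⟨b, right_mem_Icc.2 hab, (b, g'), ⟨⟨right_mem_Icc.2 hab, hg'⟩, hg'b⟩, rfl⟩
  dsimp only at hw₂ hwg₁ hg₂w
  subst hw₂
  exact ⟨_, hw, (hconn _ hw).out hg₂ hg₁ ⟨hg₂w, hwg₁⟩⟩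

lemma measureReal_Iio_eq_leftLim_cdf (μ : Measure ℝ) [IsProbabilityMeasure μ] (x : ℝ) :
    μ.real (Iio x) = Function.leftLim (cdf μ) x := by
  have h := (cdf μ).measure_Iio (tendsto_cdf_atBot μ) x
  rw [measure_cdf, sub_zero] at h
  have hnonneg : 0 ≤ Function.leftLim (cdf μ) x :=
    (cdf_nonneg μ (x - 1)).trans ((monotone_cdf μ).le_leftLim (sub_one_lt x))
  rw [measureReal_def, h, ENNReal.toReal_ofReal hnonneg]

lemma upperSemicontinuous_measureReal_Iic (μ : Measure ℝ) [IsProbabilityMeasure μ] :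
    UpperSemicontinuous fun x => μ.real (Iic x) := by
  intro x y (hy : μ.real (Iic x) < y)
  rw [← cdf_eq_real] at hy
  have hright : ∀ᶠ b in 𝓝[>] x, cdf μ b < y :=
    nhdsWithin_mono _ Ioi_subset_Ici_self ((cdf μ).right_continuous x (Iio_mem_nhds hy))
  obtain ⟨b, hb, hxb⟩ := (hright.and self_mem_nhdsWithin).exists
  filter_upwards [Iio_mem_nhds hxb] with x' hx'
  show μ.real (Iic x') < y
  rw [← cdf_eq_real]
  exact (monotone_cdf μ hx'.le).trans_lt hb

lemma lowerSemicontinuous_measureReal_Iio (μ : Measure ℝ) [IsProbabilityMeasure μ] :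
    LowerSemicontinuous fun x => μ.real (Iio x) := by
  intro x y (hy : y < μ.real (Iio x))
  rw [measureReal_Iio_eq_leftLim_cdf] at hy
  obtain ⟨a, ha, hax⟩ :=
    ((((monotone_cdf μ).tendsto_leftLim x).eventually (lt_mem_nhds hy)).and
      self_mem_nhdsWithin).exists
  filter_upwards [Ioi_mem_nhds hax] with x' hx'
  rw [cdf_eq_real] at ha
  show y < μ.real (Iio x')
  exact ha.trans_le (measureReal_mono (Iic_subset_Iio.2 hx'))

lemma half_sub_add_div_mem_Icc {γ w : ℝ} (hγ : 0 ≤ γ) (hw : γ ≤ w) :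
    1/2 - γ/(2*w) ∈ Icc (0:ℝ) 1 ∧ 1/2 + γ/(2*w) ∈ Icc (0:ℝ) 1 := by
  have h₀ : 0 ≤ γ/(2*w) := div_nonneg hγ (by linarith)
  have h₁ : γ/(2*w) ≤ 1/2 := div_le_of_le_mul₀ (by linarith) (by norm_num) (by linarith)
  exact ⟨⟨by linarith, by linarith⟩, by linarith, by linarith⟩

def quantiles (φ : Measure ℝ) (z : ℝ) : Set ℝ := {q | isQuantile φ z q}

section Quantiles

variable {φ : Measure ℝ}

lemma le_one_of_mem_quantiles_sub {z z' g : ℝ} (hg : g ∈ quantiles φ z' - quantiles φ z) :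
    g ≤ 1 := by
  obtain ⟨β, hβ, α, hα, rfl⟩ := hg
  linarith [hβ.1.2, hα.1.1]

variable [IsProbabilityMeasure φ]

lemma isClosed_setOf_isQuantile : IsClosed {p : ℝ × ℝ | isQuantile φ p.1 p.2} := by
  have h01 : IsClosed {p : ℝ × ℝ | p.2 ∈ Icc (0:ℝ) 1} := isClosed_Icc.preimage continuous_snd
  have hG : IsClosed {p : ℝ × ℝ | φ.real (Iio p.2) ≤ p.1} :=
    (lowerSemicontinuous_measureReal_Iio φ).isClosed_epigraph.preimage continuous_swap
  have hF : IsClosed {p : ℝ × ℝ | p.1 ≤ φ.real (Iic p.2)} :=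
    (upperSemicontinuous_measureReal_Iic φ).IsClosed_hypograph.preimage continuous_swap
  exact h01.inter (hG.inter hF)

lemma ordConnected_quantiles (z : ℝ) : (quantiles φ z).OrdConnected :=
  ⟨fun _ ha _ hb _ hq => ⟨⟨ha.1.1.trans hq.1, hq.2.trans hb.1.2⟩,
    (measureReal_mono (Iio_subset_Iio hq.2)).trans hb.2.1,
    ha.2.2.trans (measureReal_mono (Iic_subset_Iic.2 hq.1))⟩⟩

lemma isQuantile.le_of_lt {z z' q q' : ℝ} (hz : z < z') (hq : isQuantile φ z q)
    (hq' : isQuantile φ z' q') : q ≤ q' := by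
  by_contra! h
  have : φ.real (Iic q') ≤ φ.real (Iio q) := measureReal_mono (Iic_subset_Iio.2 h)
  exact hz.not_ge (hq'.2.2.trans (this.trans hq.2.1))

lemma sub_le_sub_of_isQuantile {γ w w' α β α' β' : ℝ} (hγ : 0 < γ) (hw : 0 < w) (hww' : w < w')
    (hα : isQuantile φ (1/2 - γ/(2*w)) α) (hβ : isQuantile φ (1/2 + γ/(2*w)) β)
    (hα' : isQuantile φ (1/2 - γ/(2*w')) α') (hβ' : isQuantile φ (1/2 + γ/(2*w')) β') :
    β' - α' ≤ β - α := by
  have h : γ/(2*w') < γ/(2*w) := div_lt_div_of_pos_left hγ (by positivity) (by linarith)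
  exact sub_le_sub (hβ'.le_of_lt (by linarith) hβ) (hα.le_of_lt (by linarith) hα')

lemma isCompact_graph_quantiles_sub {s : Set ℝ} (hs : IsCompact s) {u v : ℝ → ℝ}
    (hu : ContinuousOn u s) (hv : ContinuousOn v s) :
    IsCompact {p : ℝ × ℝ | p.1 ∈ s ∧ p.2 ∈ quantiles φ (v p.1) - quantiles φ (u p.1)} := by
  have hs' : IsClosed (Prod.fst ⁻¹' s : Set (ℝ × ℝ × ℝ)) := hs.isClosed.preimage continuous_fst
  have hfst : ContinuousOn (fun x : ℝ × ℝ × ℝ => x.1) (Prod.fst ⁻¹' s) := continuousOn_fst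
  have hKv : IsClosed {x : ℝ × ℝ × ℝ | x.1 ∈ s ∧ isQuantile φ (v x.1) x.2.1} :=
    ((hv.comp hfst fun _ hx => hx).prodMk (by fun_prop)).preimage_isClosed_of_isClosed hs'
      isClosed_setOf_isQuantile
  have hKu : IsClosed {x : ℝ × ℝ × ℝ | x.1 ∈ s ∧ isQuantile φ (u x.1) x.2.2} :=
    ((hu.comp hfst fun _ hx => hx).prodMk (by fun_prop)).preimage_isClosed_of_isClosed hs'
      isClosed_setOf_isQuantile
  have hK : IsCompact ({x : ℝ × ℝ × ℝ | x.1 ∈ s ∧ isQuantile φ (v x.1) x.2.1} ∩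
      {x | x.1 ∈ s ∧ isQuantile φ (u x.1) x.2.2}) :=
    (hs.prod (isCompact_Icc.prod isCompact_Icc)).of_isClosed_subset (hKv.inter hKu)
      fun x hx => ⟨hx.1.1, hx.1.2.1, hx.2.2.1⟩
  convert hK.image (f := fun x => (x.1, x.2.1 - x.2.2)) (by fun_prop) using 1
  ext ⟨w, g⟩
  simp only [mem_ofPred_eq, Set.mem_sub, mem_image, mem_inter_iff, Prod.exists, Prod.mk.injEq]
  constructor
  · rintro ⟨hw, β, hβ, α, hα, rfl⟩
    exact ⟨w, β, α, ⟨⟨hw, hβ⟩, hw, hα⟩, rfl, rfl⟩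
  · rintro ⟨w, β, α, ⟨⟨hw, hβ⟩, -, hα⟩, rfl, rfl⟩
    exact ⟨hw, β, hβ, α, hα, rfl⟩

variable (hφ : φ (Icc 0 1) = 1)
include hφ

lemma isQuantile_zero_zero : isQuantile φ 0 0 := by
  have h : φ (Iio 0) = 0 :=
    measure_mono_null (fun x (hx : x < 0) (hx' : x ∈ Icc 0 1) => hx.not_ge hx'.1)
      ((prob_compl_eq_zero_iff (s := Icc (0:ℝ) 1) measurableSet_Icc).2 hφ)
  exact ⟨left_mem_Icc.2 zero_le_one, by simp [h], measureReal_nonneg⟩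

lemma isQuantile_one_one : isQuantile φ 1 1 := by
  have h : φ (Iic 1) = 1 := le_antisymm prob_le_one (hφ ▸ measure_mono Icc_subset_Iic_self)
  exact ⟨right_mem_Icc.2 zero_le_one, measureReal_le_one, by simp [h]⟩

lemma nonempty_quantiles {z : ℝ} (hz : z ∈ Icc (0:ℝ) 1) : (quantiles φ z).Nonempty := by
  obtain ⟨q, hq, hG, hF⟩ := isPreconnected_closed_iff.1 isPreconnected_Icc _ _
    ((lowerSemicontinuous_measureReal_Iio φ).isClosed_preimage z)
    ((upperSemicontinuous_measureReal_Iic φ).isClosed_preimage z)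
    (fun q _ => (le_or_gt (φ.real (Iio q)) z).imp id
      fun h => h.le.trans (measureReal_mono Iio_subset_Iic_self))
    ⟨0, left_mem_Icc.2 zero_le_one, (isQuantile_zero_zero hφ).2.1.trans hz.1⟩
    ⟨1, right_mem_Icc.2 zero_le_one, hz.2.trans (isQuantile_one_one hφ).2.2⟩
  exact ⟨q, hq, hG, hF⟩

end Quantiles

theorem stmt5 (φ : Measure ℝ) [IsProbabilityMeasure φ] (hφ : φ (Icc (0:ℝ) 1) = 1)
    (γ : ℝ) (hγ : γ ∈ Ioc (0:ℝ) 1) :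
    ∃! w, w ∈ Icc γ 1 ∧ ∃ α β, isQuantile φ (1/2 - γ/(2*w)) α ∧
      isQuantile φ (1/2 + γ/(2*w)) β ∧ β - α = w := by
  obtain ⟨hγ0, hγ1⟩ := hγ
  have hne (w : ℝ) (hw : w ∈ Icc γ 1) :
      (quantiles φ (1/2 + γ/(2*w)) - quantiles φ (1/2 - γ/(2*w))).Nonempty :=
    have hz := half_sub_add_div_mem_Icc hγ0.le hw.1
    (nonempty_quantiles hφ hz.2).sub (nonempty_quantiles hφ hz.1)
  have hcont : ContinuousOn (fun w => γ/(2*w)) (Icc γ 1) :=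
    continuousOn_const.div (by fun_prop) fun w hw => (mul_pos two_pos (hγ0.trans_le hw.1)).ne'
  have hγγ : γ/(2*γ) = 1/2 := by field_simp
  obtain ⟨W, hW, β, hβ, α, hα, hαβ⟩ := exists_mem_self_of_isCompact_graph hγ1
    (isCompact_graph_quantiles_sub isCompact_Icc (continuousOn_const.sub hcont)
      (continuousOn_const.add hcont)) hne
    (fun _ _ => ((ordConnected_quantiles _).convex.sub
      (ordConnected_quantiles _).convex).ordConnected)
    ⟨1 - 0, sub_mem_sub (by rw [hγγ, add_halves]; exact isQuantile_one_one hφ)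
      (by rw [hγγ, sub_self]; exact isQuantile_zero_zero hφ), by linarith⟩
    (have ⟨g, hg⟩ := hne 1 ⟨hγ1, le_rfl⟩; ⟨g, hg, le_one_of_mem_quantiles_sub hg⟩)
  refine ⟨W, ⟨hW, α, β, hα, hβ, hαβ⟩, fun w ⟨hw, α', β', hα', hβ', hαβ'⟩ => ?_⟩
  have hw0 : 0 < w := hγ0.trans_le hw.1
  have hW0 : 0 < W := hγ0.trans_le hW.1
  refine le_antisymm (not_lt.1 fun h => ?_) (not_lt.1 fun h => ?_)
  · linarith [sub_le_sub_of_isQuantile hγ0 hW0 h hα hβ hα' hβ']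
  · linarith [sub_le_sub_of_isQuantile hγ0 hw0 h hα' hβ' hα hβ]
end

section
/- Let φ be a probability distribution on [0,1] and s a median of φ. For every b ∈ [0,1], E_{v∼φ}|b − v| − E_{v∼φ}|s − v| ≤ |b − s| · (1 − 2·Pr_{v∼φ}[s < b ≤ v or v ≤ b < s]). -/
open MeasureTheory Set

theorem stmt7 (φ : Measure ℝ) [IsProbabilityMeasure φ] (hφ : φ (Icc (0:ℝ) 1) = 1)
    (s : ℝ) (hs : s ∈ Icc (0:ℝ) 1)
    (hmed₁ : (φ (Iio s)).toReal ≤ 1/2) (hmed₂ : (1:ℝ)/2 ≤ (φ (Iic s)).toReal)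
    (b : ℝ) (hb : b ∈ Icc (0:ℝ) 1) :
    (∫ v, |b - v| ∂φ) - (∫ v, |s - v| ∂φ)
      ≤ |b - s| * (1 - 2 * (φ {v | (s < b ∧ b ≤ v) ∨ (v ≤ b ∧ b < s)}).toReal) := by
  set E : Set ℝ := {v | (s < b ∧ b ≤ v) ∨ (v ≤ b ∧ b < s)} with hE
  have hEm : MeasurableSet E := by
    have : E = {v : ℝ | s < b ∧ b ≤ v} ∪ {v : ℝ | v ≤ b ∧ b < s} := rfl
    rw [this]
    apply MeasurableSet.union
    · by_cases h : s < b
      · have : {v : ℝ | s < b ∧ b ≤ v} = Ici b := by ext v; simp [h]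
        rw [this]; exact measurableSet_Ici
      · have : {v : ℝ | s < b ∧ b ≤ v} = ∅ := by ext v; simp [h]
        rw [this]; exact MeasurableSet.empty
    · by_cases h : b < s
      · have : {v : ℝ | v ≤ b ∧ b < s} = Iic b := by ext v; simp [h]
        rw [this]; exact measurableSet_Iic
      · have : {v : ℝ | v ≤ b ∧ b < s} = ∅ := by ext v; simp [h]
        rw [this]; exact MeasurableSet.empty
  -- a.e. v ∈ [0,1]
  have hae : ∀ᵐ v ∂φ, v ∈ Icc (0:ℝ) 1 := by
    have hc := measure_compl (measurableSet_Icc : MeasurableSet (Icc (0:ℝ) 1))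
      (measure_ne_top φ _)
    rw [hφ, measure_univ] at hc
    simp only [tsub_self] at hc
    exact ae_iff.2 hc
  -- integrability of |c - v|
  have hint : ∀ c : ℝ, c ∈ Icc (0:ℝ) 1 → Integrable (fun v => |c - v|) φ := by
    intro c hc
    apply Integrable.mono' (integrable_const (2:ℝ))
    · exact ((continuous_const.sub continuous_id).abs).aestronglyMeasurable
    · filter_upwards [hae] with v hv
      rw [Real.norm_eq_abs, abs_abs, abs_le]
      constructor <;> [linarith [hv.1, hv.2, hc.1, hc.2]; linarith [hv.1, hv.2, hc.1, hc.2]]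
  have hib := hint b hb
  have his := hint s hs
  -- integrable g
  have hgint : Integrable (fun v => |b - s| - 2 * |b - s| * E.indicator (fun _ => (1:ℝ)) v) φ := by
    apply (integrable_const (|b - s|)).sub
    apply Integrable.const_mul
    exact (integrable_indicator_iff hEm).2 (integrableOn_const (measure_ne_top φ E))
  -- pointwise bound
  have hpt : ∀ v, |b - v| - |s - v| ≤ |b - s| - 2 * |b - s| * E.indicator (fun _ => (1:ℝ)) v := by
    intro v
    by_cases hv : v ∈ E
    · rw [Set.indicator_of_mem hv]
      rcases hv with ⟨h1, h2⟩ | ⟨h1, h2⟩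
      · rw [abs_of_nonpos (by linarith : b - v ≤ 0), abs_of_nonpos (by linarith : s - v ≤ 0),
          abs_of_pos (by linarith : 0 < b - s)]
        linarith
      · rw [abs_of_nonneg (by linarith : 0 ≤ b - v), abs_of_nonneg (by linarith : 0 ≤ s - v),
          abs_of_neg (by linarith : b - s < 0)]
        linarith
    · rw [Set.indicator_of_notMem hv]
      have h1 := abs_sub_abs_le_abs_sub (b - v) (s - v)
      have h2 : b - v - (s - v) = b - s := by ring
      rw [h2] at h1
      have h3 := le_abs_self (|b - v| - |s - v|)
      linarith
  calc (∫ v, |b - v| ∂φ) - (∫ v, |s - v| ∂φ)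
      = ∫ v, (|b - v| - |s - v|) ∂φ := (integral_sub hib his).symm
    _ ≤ ∫ v, (|b - s| - 2 * |b - s| * E.indicator (fun _ => (1:ℝ)) v) ∂φ :=
        integral_mono (hib.sub his) hgint hpt
    _ = |b - s| - 2 * |b - s| * (φ E).toReal := by
        rw [integral_sub (integrable_const _) (by
          apply Integrable.const_mul
          exact (integrable_indicator_iff hEm).2 (integrableOn_const (measure_ne_top φ E)))]
        rw [integral_const, probReal_univ, integral_const_mul, integral_indicator_const _ hEm]
        simp [Measure.real]
    _ = |b - s| * (1 - 2 * (φ E).toReal) := by ring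
end
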